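/- arXiv:1403.4142 — 3 statements merged into one kernel-verified Lean document; each statement's English description precedes it below -/
import Mathlib

section
/- Counting eigenvalues via an LDLᵀ factorization of the shifted matrix: let A be a real symmetric n×n matrix, σ ∈ ℝ, and suppose A − σI = L D Lᵀ where L is an invertible real n×n matrix and D is a diagonal real n×n matrix. Then the number of eigenvalues of A that are less than σ (counted with multiplicity) equals the number of indices i with D_{ii} < 0. -/
/-!
The quadratic forms `x ↦ xᵀ S x` and `x ↦ xᵀ (P S Pᵀ) x` are isometric through `x ↦ Pᵀ x` when `P`
is invertible. The spectral theorem gives `A - σ I = U diag(λ - σ) Uᵀ` with `U` orthogonal, so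
`diag(λ - σ)` and `D` define equivalent quadratic forms. By Sylvester's law of inertia,
equivalent diagonal forms have the same number of negative weights.
-/

open Matrix QuadraticMap Finset

namespace Matrix

variable {ι : Type*} [Fintype ι] [DecidableEq ι]

section CommRing

variable {R : Type*} [CommRing R]

theorem toQuadraticForm'_apply (S : Matrix ι ι R) (x : ι → R) :
    S.toQuadraticForm' x = x ⬝ᵥ S *ᵥ x := by
  simp [toQuadraticForm', toLinearMap₂'_apply']

theorem toQuadraticForm'_diagonal (w : ι → R) :
    (diagonal w).toQuadraticForm' = weightedSumSquares R w := by
  ext x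
  simp only [toQuadraticForm'_apply, weightedSumSquares_apply, dotProduct, mulVec_diagonal,
    smul_eq_mul]
  exact Finset.sum_congr rfl fun i _ ↦ by ring

theorem toQuadraticForm'_mul_mul_transpose_apply (P S : Matrix ι ι R) (x : ι → R) :
    (P * S * Pᵀ).toQuadraticForm' x = S.toQuadraticForm' (Pᵀ *ᵥ x) := by
  rw [toQuadraticForm'_apply, toQuadraticForm'_apply, ← mulVec_mulVec, ← mulVec_mulVec,
    dotProduct_mulVec, ← vecMul_transpose Pᵀ, transpose_transpose]

theorem equivalent_toQuadraticForm'_mul_mul_transpose {P : Matrix ι ι R} (hP : IsUnit P)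
    (S : Matrix ι ι R) : (P * S * Pᵀ).toQuadraticForm'.Equivalent S.toQuadraticForm' :=
  letI := hP.invertible
  ⟨{ toLinearEquiv := Pᵀ.toLinearEquiv' (invertibleTranspose P)
     map_app' := fun x ↦ (toQuadraticForm'_mul_mul_transpose_apply P S x).symm }⟩

end CommRing

theorem sigNeg_toQuadraticForm'_eq_card {𝕜 : Type*} [Field 𝕜] [LinearOrder 𝕜]
    [IsStrictOrderedRing 𝕜] {S P : Matrix ι ι 𝕜} (hP : IsUnit P) {w : ι → 𝕜}
    (hS : S = P * diagonal w * Pᵀ) : sigNeg S.toQuadraticForm' = #{i | w i < 0} := by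
  rw [hS, (equivalent_toQuadraticForm'_mul_mul_transpose hP _).sigNeg_eq,
    toQuadraticForm'_diagonal, QuadraticForm.sigNeg_weightedSumSquares, ← Set.ncard_coe_finset]
  simp

theorem IsHermitian.sub_smul_one_eq_mul_diagonal_mul_transpose {A : Matrix ι ι ℝ} (hA : A.IsHermitian) (σ : ℝ) :
    A - σ • 1 = (hA.eigenvectorUnitary : Matrix ι ι ℝ) *
      diagonal (fun i ↦ hA.eigenvalues i - σ) * (hA.eigenvectorUnitary : Matrix ι ι ℝ)ᵀ := by
  set U : Matrix ι ι ℝ := ↑hA.eigenvectorUnitary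
  have hUUt : U * Uᵀ = 1 := by
    simpa [U, star_eq_conjTranspose] using Unitary.mul_star_self_of_mem hA.eigenvectorUnitary.2
  have hshift : diagonal (fun i ↦ hA.eigenvalues i - σ) = diagonal hA.eigenvalues - σ • 1 := by
    rw [smul_one_eq_diagonal, diagonal_sub]
  conv_lhs => rw [hA.spectral_theorem, Unitary.conjStarAlgAut_apply]
  rw [hshift, mul_sub, sub_mul, mul_smul_one, smul_mul, hUUt]
  simp [U, star_eq_conjTranspose]

end Matrix

/-- Counting eigenvalues via an `LDLᵀ` factorization of the shifted matrix:
if `A - σ·I = L * D * Lᵀ` with `L` invertible and `D` diagonal, then the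
number of eigenvalues of the real symmetric matrix `A` below `σ`
(with multiplicity) equals the number of negative diagonal entries of `D`. -/
theorem eigenvalue_count_eq_negative_diag_of_ldlt {n : ℕ}
    (A L D : Matrix (Fin n) (Fin n) ℝ) (hA : A.IsHermitian) (σ : ℝ)
    (hL : IsUnit L) (hD : D.IsDiag)
    (hfact : A - σ • (1 : Matrix (Fin n) (Fin n) ℝ) = L * D * Lᵀ) :
    (Finset.univ.filter fun i => hA.eigenvalues i < σ).card
      = (Finset.univ.filter fun i => D i i < 0).card := by
  have hcount := sigNeg_toQuadraticForm'_eq_card Unitary.isUnit_coe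
    (hA.sub_smul_one_eq_mul_diagonal_mul_transpose σ)
  rw [sigNeg_toQuadraticForm'_eq_card hL (by rw [hfact, hD.diagonal_diag])] at hcount
  simp only [sub_neg, diag_apply] at hcount
  exact hcount.symm
end

section
/- Weyl's perturbation inequality: let A and E be real symmetric n×n matrices, and let λ₁(M) ≤ … ≤ λₙ(M) denote the nondecreasingly ordered eigenvalues (with multiplicity) of a symmetric matrix M. Then for every k ∈ {1,…,n}, |λ_k(A + E) − λ_k(A)| ≤ ‖E‖₂, where ‖E‖₂ is the spectral norm (operator 2-norm) of E. -/
/-!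
Number orthonormal eigenbases of `T` and `T + D` so that the eigenvalues increase. If `x ≠ 0`
lies both in the span of the eigenvectors of `T` with index `≥ k` and in the span of the
eigenvectors of `T + D` with index `≤ k` (such an `x` exists because the two spans have
dimensions `n - k` and `k + 1`), then its Rayleigh quotient is at least `λₖ(T)` for `T` and at
most `λₖ(T + D)` for `T + D`, while the two quadratic forms differ by at most `‖D‖ ‖x‖²`.
-/

/-- The spectral norm (operator 2-norm) of a real matrix, i.e. the operator
norm of the induced linear map between Euclidean spaces. -/
noncomputable def specNorm {m n : Type*} [Fintype m] [Fintype n] [DecidableEq n]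
    (E : Matrix m n ℝ) : ℝ :=
  ‖LinearMap.toContinuousLinearMap (Matrix.toEuclideanLin E)‖

open Module Submodule RCLike
open scoped InnerProductSpace ComplexConjugate

theorem OrthonormalBasis.repr_eq_zero_of_mem_span_image {𝕜 V ι : Type*} [RCLike 𝕜]
    [NormedAddCommGroup V] [InnerProductSpace 𝕜 V] [Fintype ι] {b : OrthonormalBasis ι 𝕜 V}
    {s : Set ι} {x : V} (hx : x ∈ span 𝕜 (b '' s)) {j : ι} (hj : j ∉ s) : b.repr x j = 0 := by
  rw [← b.coe_toBasis, Basis.mem_span_image] at hx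
  rw [← b.coe_toBasis_repr_apply]
  exact Finsupp.notMem_support_iff.mp fun h => hj (hx h)

theorem OrthonormalBasis.norm_sq_eq_sum {𝕜 V ι : Type*} [RCLike 𝕜] [NormedAddCommGroup V]
    [InnerProductSpace 𝕜 V] [Fintype ι] (b : OrthonormalBasis ι 𝕜 V) (x : V) :
    ‖x‖ ^ 2 = ∑ i, ‖b.repr x i‖ ^ 2 := by
  simp only [b.repr_apply_apply, b.sum_sq_norm_inner_right]

theorem Module.Basis.finrank_span_image {K V ι : Type*} [DivisionRing K] [AddCommGroup V]
    [Module K V] (b : Basis ι K V) (s : Finset ι) : finrank K (span K (b '' s)) = s.card := by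
  rw [Set.image_eq_range, ← Fintype.card_coe s]
  exact finrank_span_eq_card (b.linearIndependent.comp _ Subtype.val_injective)

theorem Module.Basis.exists_ne_zero_mem_span_Ici_mem_span_Iic {K V : Type*} [Field K]
    [AddCommGroup V] [Module K V] {n : ℕ} (b c : Basis (Fin n) K V) (k : Fin n) :
    ∃ x ≠ 0, x ∈ span K (b '' Set.Ici k) ∧ x ∈ span K (c '' Set.Iic k) := by
  have : FiniteDimensional K V := b.finiteDimensional_of_finite
  have hdim : finrank K V <
      finrank K (span K (b '' Set.Ici k)) + finrank K (span K (c '' Set.Iic k)) := by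
    rw [← Finset.coe_Ici, ← Finset.coe_Iic, b.finrank_span_image, c.finrank_span_image,
      finrank_eq_card_basis b, Fin.card_Ici, Fin.card_Iic, Fintype.card_fin]
    omega
  have hnot := mt finrank_add_finrank_le_of_disjoint hdim.not_ge
  simp only [disjoint_def, not_forall] at hnot
  obtain ⟨x, hxb, hxc, hx⟩ := hnot
  exact ⟨x, hx, hxb, hxc⟩

section Rayleigh

variable {𝕜 V ι : Type*} [RCLike 𝕜] [NormedAddCommGroup V] [InnerProductSpace 𝕜 V] [Fintype ι]
  {T : V →ₗ[𝕜] V} {b : OrthonormalBasis ι 𝕜 V} {l : ι → ℝ}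

theorem re_inner_map_self_eq_sum (hb : ∀ i, T (b i) = (l i : 𝕜) • b i) (x : V) :
    re ⟪x, T x⟫_𝕜 = ∑ i, l i * ‖b.repr x i‖ ^ 2 := by
  have hTx : T x = ∑ i, (l i * b.repr x i) • b i := by
    conv_lhs => rw [← b.sum_repr x]
    simp only [map_sum, map_smul, hb, smul_smul, mul_comm]
  have hxb : ∀ i, ⟪x, b i⟫_𝕜 = conj (b.repr x i) := fun i => by
    rw [b.repr_apply_apply, inner_conj_symm]
  simp only [hTx, inner_sum, inner_smul_right, hxb, map_sum, mul_assoc, mul_conj]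
  norm_cast

theorem mul_norm_sq_le_re_inner_map_self (hb : ∀ i, T (b i) = (l i : 𝕜) • b i) {s : Set ι}
    {x : V} (hx : x ∈ span 𝕜 (b '' s)) {c : ℝ} (hc : ∀ j ∈ s, c ≤ l j) :
    c * ‖x‖ ^ 2 ≤ re ⟪x, T x⟫_𝕜 := by
  rw [re_inner_map_self_eq_sum hb, b.norm_sq_eq_sum, Finset.mul_sum]
  refine Finset.sum_le_sum fun j _ => ?_
  by_cases hj : j ∈ s
  · exact mul_le_mul_of_nonneg_right (hc j hj) (sq_nonneg _)
  · simp [b.repr_eq_zero_of_mem_span_image hx hj]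

theorem re_inner_map_self_le_mul_norm_sq (hb : ∀ i, T (b i) = (l i : 𝕜) • b i) {s : Set ι}
    {x : V} (hx : x ∈ span 𝕜 (b '' s)) {c : ℝ} (hc : ∀ j ∈ s, l j ≤ c) :
    re ⟪x, T x⟫_𝕜 ≤ c * ‖x‖ ^ 2 := by
  rw [re_inner_map_self_eq_sum hb, b.norm_sq_eq_sum, Finset.mul_sum]
  refine Finset.sum_le_sum fun j _ => ?_
  by_cases hj : j ∈ s
  · exact mul_le_mul_of_nonneg_right (hc j hj) (sq_nonneg _)
  · simp [b.repr_eq_zero_of_mem_span_image hx hj]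

end Rayleigh

theorem abs_re_inner_map_self_le {𝕜 V : Type*} [RCLike 𝕜] [NormedAddCommGroup V]
    [InnerProductSpace 𝕜 V] [FiniteDimensional 𝕜 V] (D : V →ₗ[𝕜] V) (x : V) :
    |re ⟪x, D x⟫_𝕜| ≤ ‖LinearMap.toContinuousLinearMap D‖ * ‖x‖ ^ 2 :=
  calc |re ⟪x, D x⟫_𝕜| ≤ ‖x‖ * ‖D x‖ := (abs_re_le_norm _).trans (norm_inner_le_norm _ _)
    _ ≤ ‖x‖ * (‖LinearMap.toContinuousLinearMap D‖ * ‖x‖) :=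
        mul_le_mul_of_nonneg_left ((LinearMap.toContinuousLinearMap D).le_opNorm x) (norm_nonneg _)
    _ = ‖LinearMap.toContinuousLinearMap D‖ * ‖x‖ ^ 2 := by ring

section Weyl

variable {𝕜 V : Type*} [RCLike 𝕜] [NormedAddCommGroup V] [InnerProductSpace 𝕜 V] {n : ℕ}
  {T U : V →ₗ[𝕜] V} {b c : OrthonormalBasis (Fin n) 𝕜 V} {l m : Fin n → ℝ}

theorem le_add_of_forall_re_inner_le_add (hl : Monotone l) (hm : Monotone m)
    (hb : ∀ i, T (b i) = (l i : 𝕜) • b i) (hc : ∀ i, U (c i) = (m i : 𝕜) • c i) {C : ℝ}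
    (hTU : ∀ x, re ⟪x, T x⟫_𝕜 ≤ re ⟪x, U x⟫_𝕜 + C * ‖x‖ ^ 2) (k : Fin n) : l k ≤ m k + C := by
  obtain ⟨x, hx0, hxb, hxc⟩ := b.toBasis.exists_ne_zero_mem_span_Ici_mem_span_Iic c.toBasis k
  rw [b.coe_toBasis] at hxb
  rw [c.coe_toBasis] at hxc
  have hlow := mul_norm_sq_le_re_inner_map_self hb hxb fun j hj => hl (Set.mem_Ici.mp hj)
  have hup := re_inner_map_self_le_mul_norm_sq hc hxc fun j hj => hm (Set.mem_Iic.mp hj)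
  have hx : 0 < ‖x‖ ^ 2 := by positivity
  nlinarith [hTU x]

theorem abs_eigenvalue_add_sub_le [FiniteDimensional 𝕜 V] {D : V →ₗ[𝕜] V}
    (hl : Monotone l) (hm : Monotone m)
    (hb : ∀ i, T (b i) = (l i : 𝕜) • b i) (hc : ∀ i, (T + D) (c i) = (m i : 𝕜) • c i)
    (k : Fin n) : |m k - l k| ≤ ‖LinearMap.toContinuousLinearMap D‖ := by
  have hD := fun x => abs_le.mp (abs_re_inner_map_self_le D x)
  rw [abs_sub_le_iff]
  constructor
  · refine sub_le_iff_le_add'.mpr (le_add_of_forall_re_inner_le_add hm hl hc hb (fun x => ?_) k)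
    simp only [LinearMap.add_apply, inner_add_right, map_add]
    linarith [(hD x).2]
  · refine sub_le_iff_le_add'.mpr (le_add_of_forall_re_inner_le_add hl hm hb hc (fun x => ?_) k)
    simp only [LinearMap.add_apply, inner_add_right, map_add]
    linarith [(hD x).1]

end Weyl

theorem Matrix.IsHermitian.toEuclideanLin_eigenvectorBasis {𝕜 n : Type*} [RCLike 𝕜] [Fintype n]
    [DecidableEq n] {A : Matrix n n 𝕜} (hA : A.IsHermitian) (i : n) :
    toEuclideanLin A (hA.eigenvectorBasis i) = (hA.eigenvalues i : 𝕜) • hA.eigenvectorBasis i := by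
  apply WithLp.ofLp_injective 2
  rw [toLpLin_apply, WithLp.ofLp_toLp, hA.mulVec_eigenvectorBasis, WithLp.ofLp_smul,
    RCLike.real_smul_eq_coe_smul (K := 𝕜)]

/-- Weyl's perturbation inequality: if `μ` and `ν` are the nondecreasing
enumerations (with multiplicity) of the eigenvalues of the real symmetric
matrices `A` and `A + E`, then `|ν k - μ k| ≤ ‖E‖₂` for every `k`. -/
theorem weyl_perturbation {n : ℕ}
    (A E : Matrix (Fin n) (Fin n) ℝ) (hA : A.IsHermitian) (hE : E.IsHermitian)
    (μ ν : Fin n → ℝ) (hμmono : Monotone μ) (hνmono : Monotone ν)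
    (d e : Equiv.Perm (Fin n))
    (hμ : μ = hA.eigenvalues ∘ d) (hν : ν = (hA.add hE).eigenvalues ∘ e) :
    ∀ k : Fin n, |ν k - μ k| ≤ specNorm E := by
  subst hμ hν
  exact abs_eigenvalue_add_sub_le (T := Matrix.toEuclideanLin A) (D := Matrix.toEuclideanLin E)
    (b := hA.eigenvectorBasis.reindex d.symm) (c := (hA.add hE).eigenvectorBasis.reindex e.symm)
    hμmono hνmono (fun i => by simpa using hA.toEuclideanLin_eigenvectorBasis (d i))
    (fun i => by simpa [← map_add] using (hA.add hE).toEuclideanLin_eigenvectorBasis (e i))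
end

section
/- Two-level error representation of the adaptive cluster basis construction (combining equations (error 2) and the son-splitting identity): let Q₁ ∈ ℝ^{m₁×k} and Q₂ ∈ ℝ^{m₂×k} have orthonormal columns (QᵢᵀQᵢ = I_k), let U := diag(Q₁, Q₂) be the block-diagonal (m₁+m₂)×2k matrix, let Q̂ ∈ ℝ^{2k×k} have orthonormal columns, set Q := U Q̂, and let M = [M₁; M₂] be any real (m₁+m₂)×q matrix with blocks M₁ ∈ ℝ^{m₁×q}, M₂ ∈ ℝ^{m₂×q}. Then ‖Q Qᵀ M − M‖_F² = ‖Q̂ Q̂ᵀ (Uᵀ M) − Uᵀ M‖_F² + ‖Q₁ Q₁ᵀ M₁ − M₁‖_F² + ‖Q₂ Q₂ᵀ M₂ − M₂‖_F², so the truncation error of the father cluster decomposes exactly into the truncated-SVD error at the father and the projection errors of the two sons. -/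
open Matrix

/-- The Frobenius norm of a real matrix: the square root of the sum of the
squares of its entries. -/
noncomputable def frob {m n : Type*} [Fintype m] [Fintype n]
    (A : Matrix m n ℝ) : ℝ :=
  Real.sqrt (∑ i, ∑ j, (A i j) ^ 2)

/-! The father error `Q Qᵀ M - M` splits as `U (Q̂ Q̂ᵀ Uᵀ M - Uᵀ M) + (U Uᵀ M - M)`.
The first summand lies in the range of `U`, the second is annihilated by `Uᵀ`, so the
squared Frobenius norms add; `U` has orthonormal columns and therefore preserves the
norm of the first summand; and since `U` is block diagonal, `U Uᵀ M - M` consists of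
the two son errors stacked on top of each other. -/

section Frobenius

variable {l m n : Type*} [Fintype l] [Fintype m] [Fintype n]

lemma frob_sq_eq_trace (A : Matrix m n ℝ) : frob A ^ 2 = trace (Aᵀ * A) := by
  rw [frob, Real.sq_sqrt (by positivity), Finset.sum_comm]
  simp [trace, mul_apply, sq]

lemma frob_sq_add_of_transpose_mul_eq_zero {A B : Matrix m n ℝ} (hAB : Aᵀ * B = 0) :
    frob (A + B) ^ 2 = frob A ^ 2 + frob B ^ 2 := by
  have hBA : Bᵀ * A = 0 := by rw [← transpose_transpose (Bᵀ * A), transpose_mul,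
    transpose_transpose, hAB, transpose_zero]
  simp only [frob_sq_eq_trace, transpose_add, Matrix.add_mul, Matrix.mul_add, hAB, hBA,
    add_zero, zero_add, trace_add]

lemma frob_mul_of_transpose_mul_self [DecidableEq l] {U : Matrix m l ℝ} (hU : Uᵀ * U = 1)
    (E : Matrix l n ℝ) : frob (U * E) = frob E := by
  have h : frob (U * E) ^ 2 = frob E ^ 2 := by
    rw [frob_sq_eq_trace, frob_sq_eq_trace, transpose_mul, Matrix.mul_assoc,
      ← Matrix.mul_assoc Uᵀ, hU, Matrix.one_mul]
  exact (pow_left_inj₀ (Real.sqrt_nonneg _) (Real.sqrt_nonneg _) two_ne_zero).mp h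

lemma frob_sq_fromRows {m₁ m₂ : Type*} [Fintype m₁] [Fintype m₂]
    (A : Matrix m₁ n ℝ) (B : Matrix m₂ n ℝ) :
    frob (fromRows A B) ^ 2 = frob A ^ 2 + frob B ^ 2 := by
  rw [frob_sq_eq_trace, frob_sq_eq_trace, frob_sq_eq_trace, transpose_fromRows,
    fromCols_mul_fromRows, trace_add]

end Frobenius

section BlockDiagonal

variable {m₁ m₂ n₁ n₂ : Type*} [Fintype m₁] [Fintype m₂]

lemma transpose_mul_fromBlocks_diagonal [DecidableEq n₁] [DecidableEq n₂]
    {Q₁ : Matrix m₁ n₁ ℝ} {Q₂ : Matrix m₂ n₂ ℝ} (hQ₁ : Q₁ᵀ * Q₁ = 1) (hQ₂ : Q₂ᵀ * Q₂ = 1) :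
    (fromBlocks Q₁ 0 0 Q₂)ᵀ * fromBlocks Q₁ 0 0 Q₂ = 1 := by
  simp [fromBlocks_transpose, fromBlocks_multiply, hQ₁, hQ₂, ← fromBlocks_one]

lemma fromBlocks_diagonal_projection_error [Fintype n₁] [Fintype n₂] {p : Type*}
    (Q₁ : Matrix m₁ n₁ ℝ) (Q₂ : Matrix m₂ n₂ ℝ) (M₁ : Matrix m₁ p ℝ) (M₂ : Matrix m₂ p ℝ) :
    fromBlocks Q₁ 0 0 Q₂ * ((fromBlocks Q₁ 0 0 Q₂)ᵀ * fromRows M₁ M₂) - fromRows M₁ M₂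
      = fromRows (Q₁ * Q₁ᵀ * M₁ - M₁) (Q₂ * Q₂ᵀ * M₂ - M₂) := by
  rw [fromBlocks_transpose, fromBlocks_mul_fromRows, fromBlocks_mul_fromRows]
  ext (i | i) j <;> simp [Matrix.mul_assoc]

end BlockDiagonal

lemma projection_error_mul_eq {m l k n : Type*} [Fintype m] [Fintype l] [Fintype k]
    (U : Matrix m l ℝ) (Qhat : Matrix l k ℝ) (M : Matrix m n ℝ) :
    U * Qhat * (U * Qhat)ᵀ * M - M
      = U * (Qhat * Qhatᵀ * (Uᵀ * M) - Uᵀ * M) + (U * (Uᵀ * M) - M) := by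
  simp only [transpose_mul, Matrix.mul_sub, Matrix.mul_assoc]
  abel

theorem two_level_error_representation_general {m₁ m₂ k q : ℕ}
    (Q₁ : Matrix (Fin m₁) (Fin k) ℝ) (Q₂ : Matrix (Fin m₂) (Fin k) ℝ)
    (hQ₁ : Q₁ᵀ * Q₁ = 1) (hQ₂ : Q₂ᵀ * Q₂ = 1)
    (U : Matrix (Fin m₁ ⊕ Fin m₂) (Fin k ⊕ Fin k) ℝ)
    (hU : U = Matrix.fromBlocks Q₁ 0 0 Q₂)
    (Qhat : Matrix (Fin k ⊕ Fin k) (Fin k) ℝ)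
    (Q : Matrix (Fin m₁ ⊕ Fin m₂) (Fin k) ℝ) (hQ : Q = U * Qhat)
    (M₁ : Matrix (Fin m₁) (Fin q) ℝ) (M₂ : Matrix (Fin m₂) (Fin q) ℝ)
    (M : Matrix (Fin m₁ ⊕ Fin m₂) (Fin q) ℝ) (hM : M = Matrix.fromRows M₁ M₂) :
    frob (Q * Qᵀ * M - M) ^ 2
      = frob (Qhat * Qhatᵀ * (Uᵀ * M) - Uᵀ * M) ^ 2
        + frob (Q₁ * Q₁ᵀ * M₁ - M₁) ^ 2 + frob (Q₂ * Q₂ᵀ * M₂ - M₂) ^ 2 := by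
  subst hQ
  have hUU : Uᵀ * U = 1 := hU ▸ transpose_mul_fromBlocks_diagonal hQ₁ hQ₂
  have hsons : U * (Uᵀ * M) - M = fromRows (Q₁ * Q₁ᵀ * M₁ - M₁) (Q₂ * Q₂ᵀ * M₂ - M₂) := by
    rw [hU, hM, fromBlocks_diagonal_projection_error]
  have horth : (U * (Qhat * Qhatᵀ * (Uᵀ * M) - Uᵀ * M))ᵀ * (U * (Uᵀ * M) - M) = 0 := by
    rw [transpose_mul, Matrix.mul_assoc, Matrix.mul_sub, ← Matrix.mul_assoc Uᵀ, hUU,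
      Matrix.one_mul, sub_self, Matrix.mul_zero]
  rw [projection_error_mul_eq, frob_sq_add_of_transpose_mul_eq_zero horth,
    frob_mul_of_transpose_mul_self hUU, hsons, frob_sq_fromRows, add_assoc]

/-- Two-level error representation of the adaptive cluster basis
construction: with orthonormal son bases `Q₁, Q₂`, `U = diag(Q₁, Q₂)`,
an orthonormal `Q̂` and `Q = U Q̂`, the truncation error of the father
cluster decomposes exactly as
`‖Q Qᵀ M - M‖_F² = ‖Q̂ Q̂ᵀ (Uᵀ M) - Uᵀ M‖_F²
   + ‖Q₁ Q₁ᵀ M₁ - M₁‖_F² + ‖Q₂ Q₂ᵀ M₂ - M₂‖_F²`. -/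
theorem two_level_error_representation {m₁ m₂ k q : ℕ}
    (Q₁ : Matrix (Fin m₁) (Fin k) ℝ) (Q₂ : Matrix (Fin m₂) (Fin k) ℝ)
    (hQ₁ : Q₁ᵀ * Q₁ = 1) (hQ₂ : Q₂ᵀ * Q₂ = 1)
    (U : Matrix (Fin m₁ ⊕ Fin m₂) (Fin k ⊕ Fin k) ℝ)
    (hU : U = Matrix.fromBlocks Q₁ 0 0 Q₂)
    (Qhat : Matrix (Fin k ⊕ Fin k) (Fin k) ℝ) (hQhat : Qhatᵀ * Qhat = 1)
    (Q : Matrix (Fin m₁ ⊕ Fin m₂) (Fin k) ℝ) (hQ : Q = U * Qhat)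
    (M₁ : Matrix (Fin m₁) (Fin q) ℝ) (M₂ : Matrix (Fin m₂) (Fin q) ℝ)
    (M : Matrix (Fin m₁ ⊕ Fin m₂) (Fin q) ℝ) (hM : M = Matrix.fromRows M₁ M₂) :
    frob (Q * Qᵀ * M - M) ^ 2
      = frob (Qhat * Qhatᵀ * (Uᵀ * M) - Uᵀ * M) ^ 2
        + frob (Q₁ * Q₁ᵀ * M₁ - M₁) ^ 2 + frob (Q₂ * Q₂ᵀ * M₂ - M₂) ^ 2 :=
  two_level_error_representation_general Q₁ Q₂ hQ₁ hQ₂ U hU Qhat Q hQ M₁ M₂ M hM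
end
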